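/- Let G be a finite simple graph in which every vertex has degree at most Δ, and let q ∈ [0,1] satisfy q·Δ < 1. Consider independent Bernoulli(q) site percolation on G: under the product measure on configurations ω : V → {open, closed} each vertex is open with probability q independently. Fix a vertex a and let C(ω) be the set of vertices joined to a by a path of G all of whose vertices (including a and the endpoint) are open, when a is open, and C(ω) = ∅ when a is closed. Then the expected size of C satisfies E[|C|] ≤ 1/(1 − qΔ). -/

import Mathlib

/-- The subgraph of `G` induced by the open vertices of the configuration `ω`:
two vertices are adjacent iff they are adjacent in `G` and both are open. -/
def openGraph {V : Type*} (G : SimpleGraph V) (ω : V → Bool) : SimpleGraph V where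
  Adj u v := G.Adj u v ∧ ω u = true ∧ ω v = true
  symm := ⟨fun u v ⟨h, hu, hv⟩ => ⟨h.symm, hv, hu⟩⟩
  loopless := ⟨fun u ⟨h, _, _⟩ => G.irrefl h⟩

/-- The open component of `a` in the configuration `ω`: the set of vertices reachable
from `a` through open vertices, when `a` is open; empty when `a` is closed. -/
def openComponent {V : Type*} (G : SimpleGraph V) (ω : V → Bool) (a : V) : Set V :=
  {x : V | ω a = true ∧ (openGraph G ω).Reachable a x}

/-!
Union bound over self-avoiding paths: a vertex `x` lies in the open cluster of `a` only if some
path of `G` from `a` to `x` is entirely open, and a path with `k` edges has `k + 1` distinct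
vertices, so it is open with probability `q ^ (k + 1)`. Paths from `a` with `k` edges inject into
walks of length `k`, whose number is a row sum of the `k`-th power of the adjacency matrix and
hence at most `Δ ^ k`. Thus `E|C| ≤ q ∑ₖ (qΔ)ᵏ ≤ 1 / (1 - qΔ)`.
-/
open Finset

namespace SimpleGraph

variable {V : Type*}

lemma Path.card_support_toFinset [DecidableEq V] {G : SimpleGraph V} {a x : V} (p : G.Path a x) :
    #p.1.support.toFinset = p.1.length + 1 := by
  rw [List.toFinset_card_of_nodup p.2.support_nodup, Walk.length_support]

variable [Fintype V] [DecidableEq V] (G : SimpleGraph V) [DecidableRel G.Adj]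

lemma card_path_length_eq_le_adjMatrix_pow (k : ℕ) (a x : V) :
    #{p : G.Path a x | p.1.length = k} ≤ (G.adjMatrix ℕ ^ k) a x := by
  rw [adjMatrix_pow_apply_eq_card_walk, ← Fintype.card_subtype]
  exact Fintype.card_le_of_injective (fun p => ⟨p.1.1, p.2⟩)
    fun _ _ h => Subtype.ext (Subtype.ext (Subtype.mk.inj h))

lemma sum_adjMatrix_pow_apply_le {Δ : ℕ} (hdeg : ∀ v, G.degree v ≤ Δ) (k : ℕ) (a : V) :
    ∑ x, (G.adjMatrix ℕ ^ k) a x ≤ Δ ^ k := by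
  induction k generalizing a with
  | zero => simp [Matrix.one_apply]
  | succ k ih =>
    calc ∑ x, (G.adjMatrix ℕ ^ (k + 1)) a x
        = ∑ y ∈ G.neighborFinset a, ∑ x, (G.adjMatrix ℕ ^ k) y x := by
          simp only [pow_succ', adjMatrix_mul_apply]
          exact Finset.sum_comm
      _ ≤ ∑ _y ∈ G.neighborFinset a, Δ ^ k := sum_le_sum fun y _ => ih y
      _ ≤ Δ ^ (k + 1) := by
          rw [sum_const, smul_eq_mul, card_neighborFinset_eq_degree, pow_succ']
          exact Nat.mul_le_mul_right _ (hdeg a)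

lemma sum_path_pow_length_le {r : ℝ} (hr : 0 ≤ r) (a x : V) :
    ∑ p : G.Path a x, r ^ p.1.length ≤
      ∑ k ∈ range (Fintype.card V), ((G.adjMatrix ℕ ^ k) a x : ℝ) * r ^ k := by
  rw [← sum_fiberwise_of_maps_to (g := fun p : G.Path a x => p.1.length)
    fun p _ => mem_range.mpr p.2.length_lt]
  refine sum_le_sum fun k _ => ?_
  rw [sum_congr rfl fun p hp => by rw [(mem_filter.mp hp).2], sum_const, nsmul_eq_mul]
  gcongr
  exact_mod_cast G.card_path_length_eq_le_adjMatrix_pow k a x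

lemma sum_sum_path_pow_length_le {Δ : ℕ} (hdeg : ∀ v, G.degree v ≤ Δ) {r : ℝ} (hr : 0 ≤ r)
    (hrΔ : r * Δ < 1) (a : V) :
    ∑ x, ∑ p : G.Path a x, r ^ p.1.length ≤ 1 / (1 - r * Δ) := by
  have hrΔ0 : 0 ≤ r * Δ := by positivity
  calc ∑ x, ∑ p : G.Path a x, r ^ p.1.length
      ≤ ∑ x, ∑ k ∈ range (Fintype.card V), ((G.adjMatrix ℕ ^ k) a x : ℝ) * r ^ k :=
        sum_le_sum fun x _ => G.sum_path_pow_length_le hr a x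
    _ = ∑ k ∈ range (Fintype.card V), ((∑ x, (G.adjMatrix ℕ ^ k) a x : ℕ) : ℝ) * r ^ k := by
        rw [sum_comm]
        simp only [Nat.cast_sum, sum_mul]
    _ ≤ ∑ k ∈ range (Fintype.card V), (r * Δ) ^ k := by
        refine sum_le_sum fun k _ => ?_
        rw [mul_pow, mul_comm]
        gcongr
        exact_mod_cast G.sum_adjMatrix_pow_apply_le hdeg k a
    _ ≤ ∑' k, (r * Δ) ^ k :=
        (summable_geometric_of_lt_one hrΔ0 hrΔ).sum_le_tsum _ fun k _ => by positivity
    _ = 1 / (1 - r * Δ) := by rw [tsum_geometric_of_lt_one hrΔ0 hrΔ, one_div]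

end SimpleGraph

section Percolation

variable {V : Type*}

lemma openGraph_le (G : SimpleGraph V) (ω : V → Bool) : openGraph G ω ≤ G :=
  fun _ _ h => h.1

lemma SimpleGraph.Walk.support_open_of_openGraph {G : SimpleGraph V} {ω : V → Bool} {a x : V}
    (ha : ω a = true) (p : (openGraph G ω).Walk a x) : ∀ v ∈ p.support, ω v = true := by
  induction p with
  | nil => simpa using ha
  | cons h p ih =>
    simp only [SimpleGraph.Walk.support_cons, List.mem_cons, forall_eq_or_imp]
    exact ⟨ha, ih h.2.2⟩

def allOpen (S : Finset V) (ω : V → Bool) : ℝ :=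
  ∏ v ∈ S, if ω v = true then 1 else 0

lemma allOpen_nonneg (S : Finset V) (ω : V → Bool) : 0 ≤ allOpen S ω :=
  prod_nonneg fun v _ => by positivity

lemma exists_open_path_of_mem_openComponent [DecidableEq V] {G : SimpleGraph V} {ω : V → Bool}
    {a x : V} (hx : x ∈ openComponent G ω a) : ∃ p : G.Path a x, ∀ v ∈ p.1.support, ω v = true := by
  obtain ⟨ha, ⟨w⟩⟩ := hx
  refine ⟨⟨w.toPath.1.mapLe (openGraph_le G ω), w.toPath.2.mapLe _⟩, fun v hv => ?_⟩
  rw [SimpleGraph.Walk.support_mapLe_eq_support] at hv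
  exact w.toPath.1.support_open_of_openGraph ha v hv

variable [Fintype V]

/-- The probability of the configuration `ω` under Bernoulli(`q`) site percolation. -/
def bernoulliWeight (q : ℝ) (ω : V → Bool) : ℝ :=
  ∏ v, if ω v = true then q else 1 - q

lemma bernoulliWeight_nonneg {q : ℝ} (hq0 : 0 ≤ q) (hq1 : q ≤ 1) (ω : V → Bool) :
    0 ≤ bernoulliWeight q ω :=
  prod_nonneg fun v _ => by split_ifs <;> linarith

variable [DecidableEq V]

lemma sum_bernoulliWeight_mul_allOpen (q : ℝ) (S : Finset V) :
    ∑ ω, bernoulliWeight q ω * allOpen S ω = q ^ #S := by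
  calc ∑ ω, bernoulliWeight q ω * allOpen S ω
      = ∑ ω : V → Bool, ∏ v, (if ω v = true then q else 1 - q) *
          (if v ∈ S then (if ω v = true then 1 else 0) else 1) := by
        simp only [bernoulliWeight, allOpen, prod_mul_distrib, prod_ite_mem, univ_inter]
    _ = ∏ v, ∑ b : Bool, (if b = true then q else 1 - q) *
          (if v ∈ S then (if b = true then 1 else 0) else 1) := by
        rw [Fintype.prod_sum]
    _ = ∏ v, if v ∈ S then q else 1 := by
        refine prod_congr rfl fun v _ => ?_
        split_ifs <;> simp
    _ = q ^ #S := by rw [prod_ite_mem, univ_inter, prod_const]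

lemma ncard_openComponent_le (G : SimpleGraph V) [DecidableRel G.Adj] (ω : V → Bool) (a : V) :
    ((openComponent G ω a).ncard : ℝ) ≤ ∑ x, ∑ p : G.Path a x, allOpen p.1.support.toFinset ω := by
  classical
  calc ((openComponent G ω a).ncard : ℝ)
      = ∑ x, if x ∈ openComponent G ω a then 1 else 0 := by
        rw [sum_boole, ← Set.ncard_coe_finset]
        congr 2
        ext; simp
    _ ≤ ∑ x, ∑ p : G.Path a x, allOpen p.1.support.toFinset ω := by
        refine sum_le_sum fun x _ => ?_
        split_ifs with hx
        · obtain ⟨p, hp⟩ := exists_open_path_of_mem_openComponent hx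
          have hp_open : allOpen p.1.support.toFinset ω = 1 :=
            prod_eq_one fun v hv => if_pos (hp v (List.mem_toFinset.mp hv))
          exact hp_open.symm.le.trans
            (single_le_sum (fun p _ => allOpen_nonneg p.1.support.toFinset ω) (mem_univ p))
        · exact sum_nonneg fun p _ => allOpen_nonneg _ ω

lemma sum_bernoulliWeight_mul_ncard_openComponent_le (G : SimpleGraph V) [DecidableRel G.Adj]
    {q : ℝ} (hq0 : 0 ≤ q) (hq1 : q ≤ 1) (a : V) :
    ∑ ω, bernoulliWeight q ω * ((openComponent G ω a).ncard : ℝ) ≤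
      q * ∑ x, ∑ p : G.Path a x, q ^ p.1.length := by
  calc ∑ ω, bernoulliWeight q ω * ((openComponent G ω a).ncard : ℝ)
      ≤ ∑ ω, bernoulliWeight q ω * ∑ x, ∑ p : G.Path a x, allOpen p.1.support.toFinset ω :=
        sum_le_sum fun ω _ => mul_le_mul_of_nonneg_left (ncard_openComponent_le G ω a)
          (bernoulliWeight_nonneg hq0 hq1 ω)
    _ = ∑ x, ∑ p : G.Path a x, ∑ ω, bernoulliWeight q ω * allOpen p.1.support.toFinset ω := by
        simp only [mul_sum]
        rw [sum_comm]
        exact sum_congr rfl fun x _ => sum_comm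
    _ = q * ∑ x, ∑ p : G.Path a x, q ^ p.1.length := by
        simp only [sum_bernoulliWeight_mul_allOpen, SimpleGraph.Path.card_support_toFinset,
          pow_succ', mul_sum]

end Percolation

theorem stmt19 {V : Type*} [Fintype V] [DecidableEq V] (G : SimpleGraph V)
    [DecidableRel G.Adj]
    (Δ : ℕ) (hdeg : ∀ v : V, G.degree v ≤ Δ)
    (q : ℝ) (hq0 : 0 ≤ q) (hq1 : q ≤ 1) (hqΔ : q * Δ < 1) (a : V) :
    ∑ ω : V → Bool,
        (∏ v : V, (if ω v = true then q else 1 - q)) *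
          ((openComponent G ω a).ncard : ℝ) ≤ 1 / (1 - q * Δ) := by
  have hpaths := G.sum_sum_path_pow_length_le hdeg hq0 hqΔ a
  calc ∑ ω, bernoulliWeight q ω * ((openComponent G ω a).ncard : ℝ)
      ≤ q * ∑ x, ∑ p : G.Path a x, q ^ p.1.length :=
        sum_bernoulliWeight_mul_ncard_openComponent_le G hq0 hq1 a
    _ ≤ 1 * (1 / (1 - q * Δ)) := mul_le_mul hq1 hpaths (by positivity) zero_le_one
    _ = 1 / (1 - q * Δ) := one_mul _
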